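/- Inversion for applications: if Γ ⊢ MN : A and A ≁_𝒯 𝖴, then there is a finite index set I and types B_i, C_i for i ∈ I such that ⋂_{i∈I} C_i ≤_𝒯 A, and for every i ∈ I, Γ ⊢ M : B_i → C_i and Γ ⊢ N : B_i. -/
import Mathlib


/-- Pure λ-terms with variables named by natural numbers. -/
inductive Tm : Type
  | var : ℕ → Tm
  | lam : ℕ → Tm → Tm
  | app : Tm → Tm → Tm
deriving DecidableEq

namespace Tm

/-- Free variables of a term. -/
def fv : Tm → Finset ℕ
  | var x => {x}
  | lam x t => fv t \ {x}
  | app t u => fv t ∪ fv u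

/-- A variable fresh for a given finite set of variables. -/
def fresh (s : Finset ℕ) : ℕ := (s.sup id) + 1

/-- Capture-avoiding simultaneous substitution. -/
def subst (σ : ℕ → Tm) : Tm → Tm
  | var x => σ x
  | app t u => app (subst σ t) (subst σ u)
  | lam x t =>
      let y := fresh ((fv t \ {x}).biUnion fun z => fv (σ z))
      lam y (subst (fun z => if z = x then var y else σ z) t)

/-- `M[x := N]`. -/
def subst1 (x : ℕ) (N M : Tm) : Tm :=
  subst (fun z => if z = x then N else var z) M

/-- `λx₁…xₙ. t`. -/
def lams (xs : List ℕ) (t : Tm) : Tm := xs.foldr lam t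

/-- `t M₁ ⋯ Mₘ`. -/
def apps (t : Tm) (ts : List Tm) : Tm := ts.foldl app t

/-- One-step β-reduction: contextual closure of the β-rule. -/
inductive Step : Tm → Tm → Prop
  | beta (x : ℕ) (M N : Tm) : Step (app (lam x M) N) (subst1 x N M)
  | appL {M M' : Tm} (N : Tm) : Step M M' → Step (app M N) (app M' N)
  | appR (M : Tm) {N N' : Tm} : Step N N' → Step (app M N) (app M N')
  | abs (x : ℕ) {M M' : Tm} : Step M M' → Step (lam x M) (lam x M')

/-- β-reduction: reflexive-transitive closure of one-step β-reduction. -/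
def Red : Tm → Tm → Prop := Relation.ReflTransGen Step

/-- β-convertibility: the equivalence relation generated by β-reduction. -/
def Conv : Tm → Tm → Prop := Relation.EqvGen Step

/-- `M` is solvable if `(λx⃗.M) N₁ ⋯ Nₙ` β-reduces to the identity,
where `x⃗` covers the free variables of `M`. -/
def Solvable (M : Tm) : Prop :=
  ∃ (xs : List ℕ) (Ns : List Tm) (y : ℕ),
    M.fv ⊆ xs.toFinset ∧ Red (apps (lams xs M) Ns) (lam y (var y))

/-- One-step head reduction: contraction of the head redex. -/
inductive HeadStep : Tm → Tm → Prop
  | beta (x : ℕ) (M N : Tm) (Ms : List Tm) :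
      HeadStep (apps (app (lam x M) N) Ms) (apps (subst1 x N M) Ms)
  | abs (x : ℕ) {M M' : Tm} : HeadStep M M' → HeadStep (lam x M) (lam x M')

end Tm

/-- Intersection types over a set `A` of constants, with top `𝖴`. -/
inductive Ty (A : Type) : Type
  | const : A → Ty A
  | top : Ty A
  | arrow : Ty A → Ty A → Ty A
  | inter : Ty A → Ty A → Ty A
deriving DecidableEq

/-- An intersection type theory: a subtyping relation on `Ty A` closed under
(Refl), (IncL), (IncR), (𝖴top), (Glb), (Trans) and (→∼). -/
structure ITT (A : Type) where
  le : Ty A → Ty A → Prop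
  le_refl : ∀ a, le a a
  le_incL : ∀ a b, le (Ty.inter b a) b
  le_incR : ∀ a b, le (Ty.inter b a) a
  le_top : ∀ a, le a Ty.top
  le_glb : ∀ {a b c}, le c a → le c b → le c (Ty.inter a b)
  le_trans : ∀ {a b c}, le a b → le b c → le a c
  arrow_cong : ∀ {a a' b b'}, le a a' → le a' a → le b b' → le b' b →
      le (Ty.arrow a b) (Ty.arrow a' b')

variable {A : Type}

/-- The equivalence `∼` induced by the subtyping. -/
def ITT.eqv (T : ITT A) (a b : Ty A) : Prop := T.le a b ∧ T.le b a

/-- Bases: (partial) mappings from term variables to types. -/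
def Ctx (A : Type) := ℕ → Option (Ty A)

def Ctx.empty : Ctx A := fun _ => none

/-- `Γ, x:a`. -/
def Ctx.update (Γ : Ctx A) (x : ℕ) (a : Ty A) : Ctx A :=
  fun y => if y = x then some a else Γ y

/-- The intersection type assignment system induced by an itt `T`:
rules (Ax), (𝖴), (→I), (→E), (∩I) and (≤). -/
inductive Der (T : ITT A) : Ctx A → Tm → Ty A → Prop
  | ax {Γ : Ctx A} {x a} : Γ x = some a → Der T Γ (Tm.var x) a
  | top {Γ M} : Der T Γ M Ty.top
  | arrI {Γ : Ctx A} {x M a b} :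
      Der T (Γ.update x b) M a → Der T Γ (Tm.lam x M) (Ty.arrow b a)
  | arrE {Γ M N a b} :
      Der T Γ M (Ty.arrow b a) → Der T Γ N b → Der T Γ (Tm.app M N) a
  | interI {Γ M a b} : Der T Γ M a → Der T Γ M b → Der T Γ M (Ty.inter a b)
  | sub {Γ M a b} : Der T Γ M a → T.le a b → Der T Γ M b

/-- Finite intersection `⋂_{i∈I} Aᵢ`, with `⋂_∅ = 𝖴`. -/
def interList : List (Ty A) → Ty A
  | [] => Ty.top
  | a :: l => Ty.inter a (interList l)

lemma interList_append_le {A : Type} (T : ITT A) (xs ys : List (Ty A)) :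
    T.le (interList (xs ++ ys)) (Ty.inter (interList xs) (interList ys)) := by
  induction xs with
  | nil =>
      exact T.le_glb (T.le_top _) (T.le_refl _)
  | cons x xs ih =>
      simp only [List.cons_append, interList]
      exact T.le_glb
        (T.le_glb (T.le_incL _ _) (T.le_trans (T.le_incR _ _) (T.le_trans ih (T.le_incL _ _))))
        (T.le_trans (T.le_incR _ _) (T.le_trans ih (T.le_incR _ _)))

/-- Inversion for applications: if `Γ ⊢ MN : A` and `A ≁_𝒯 𝖴`,
then there are finitely many `Bᵢ, Cᵢ` with `⋂ᵢ Cᵢ ≤_𝒯 A` and, for each `i`,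
`Γ ⊢ M : Bᵢ → Cᵢ` and `Γ ⊢ N : Bᵢ`. -/
theorem inversion_app {A : Type} (T : ITT A) (Γ : Ctx A) (M N : Tm) (a : Ty A)
    (h : Der T Γ (Tm.app M N) a) (ha : ¬ T.eqv a Ty.top) :
    ∃ l : List (Ty A × Ty A),
      T.le (interList (l.map Prod.snd)) a ∧
      ∀ p ∈ l, Der T Γ M (Ty.arrow p.1 p.2) ∧ Der T Γ N p.1 := by
  clear ha
  generalize hMN : Tm.app M N = P at h
  induction h with
  | ax _ => cases hMN
  | top =>
      exact ⟨[], T.le_refl _, by simp⟩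
  | arrI _ => cases hMN
  | arrE hM hN _ _ =>
      cases hMN
      exact ⟨[(_, _)], T.le_incL _ _, by
        simp only [List.mem_singleton]
        rintro p rfl; exact ⟨hM, hN⟩⟩
  | interI h1 h2 ih1 ih2 =>
      obtain ⟨l1, hle1, hp1⟩ := ih1 hMN
      obtain ⟨l2, hle2, hp2⟩ := ih2 hMN
      refine ⟨l1 ++ l2, ?_, ?_⟩
      · rw [List.map_append]
        exact T.le_trans (interList_append_le T _ _)
          (T.le_glb (T.le_trans (T.le_incL _ _) hle1) (T.le_trans (T.le_incR _ _) hle2))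
      · intro p hp
        rcases List.mem_append.1 hp with h | h
        · exact hp1 p h
        · exact hp2 p h
  | sub h1 hle ih =>
      obtain ⟨l, hle1, hp⟩ := ih hMN
      exact ⟨l, T.le_trans hle1 hle, hp⟩
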